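/- The set of basketballs of order n is invariant under half-rotation: if B = (B^e, B^o) is a basketball, then the pair whose even matching is {{k-1, l-1} : {k,l} ∈ B^o} and whose odd matching is {{i-1, j-1} : {i,j} ∈ B^e} (indices modulo 4n) is again a basketball of order n. -/
import Mathlib


open scoped Classical

def IsMatchingOn (M : Finset (Finset ℕ)) (S : Finset ℕ) : Prop :=
  (∀ b ∈ M, b.card = 2) ∧
  (∀ b ∈ M, ∀ b' ∈ M, b ≠ b' → Disjoint b b') ∧
  (∀ x, x ∈ S ↔ ∃ b ∈ M, x ∈ b)

def Cross (e o : Finset ℕ) : Prop :=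
  (∃ i ∈ e, ∃ k ∈ e, ∃ j ∈ o, ∃ l ∈ o, i < j ∧ j < k ∧ k < l) ∨
  (∃ i ∈ o, ∃ k ∈ o, ∃ j ∈ e, ∃ l ∈ e, i < j ∧ j < k ∧ k < l)

def IsNCMatchingOn (M : Finset (Finset ℕ)) (S : Finset ℕ) : Prop :=
  IsMatchingOn M S ∧ ∀ b ∈ M, ∀ b' ∈ M, b ≠ b' → ¬ Cross b b'

def En (n : ℕ) : Finset ℕ := (Finset.range (2 * n)).image (fun i => 2 * i)

def On (n : ℕ) : Finset ℕ := (Finset.range (2 * n)).image (fun i => 2 * i + 1)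

def IsBasketball (n : ℕ) (Be Bo : Finset (Finset ℕ)) : Prop :=
  IsNCMatchingOn Be (En n) ∧ IsNCMatchingOn Bo (On n) ∧
  ∀ e ∈ Be, (Bo.filter (fun o => Cross e o)).card = 1

def IsNCPartitionOn (Q : Finset (Finset ℕ)) (S : Finset ℕ) : Prop :=
  (∀ b ∈ Q, b.Nonempty) ∧
  (∀ b ∈ Q, ∀ b' ∈ Q, b ≠ b' → Disjoint b b') ∧
  (∀ x, x ∈ S ↔ ∃ b ∈ Q, x ∈ b) ∧
  (∀ b ∈ Q, ∀ b' ∈ Q, b ≠ b' → ¬ Cross b b')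

def shiftBlock (n : ℕ) (b : Finset ℕ) : Finset ℕ :=
  b.image (fun x => (x + (4 * n - 1)) % (4 * n))



lemma mem_En {n x : ℕ} : x ∈ En n ↔ x % 2 = 0 ∧ x < 4 * n := by
  simp only [En, Finset.mem_image, Finset.mem_range]
  constructor
  · rintro ⟨i, hi, rfl⟩; omega
  · rintro ⟨h1, h2⟩; exact ⟨x / 2, by omega, by omega⟩

lemma mem_On {n x : ℕ} : x ∈ On n ↔ x % 2 = 1 ∧ x < 4 * n := by
  simp only [On, Finset.mem_image, Finset.mem_range]
  constructor
  · rintro ⟨i, hi, rfl⟩; omega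
  · rintro ⟨h1, h2⟩; exact ⟨x / 2, by omega, by omega⟩

lemma gfun_pos {n x : ℕ} (h0 : 0 < x) (h : x < 4 * n) :
    (x + (4 * n - 1)) % (4 * n) = x - 1 := by
  have h1 : x + (4 * n - 1) = (x - 1) + 4 * n := by omega
  rw [h1, Nat.add_mod_right, Nat.mod_eq_of_lt (by omega)]

lemma gfun_zero {n : ℕ} (hn : 0 < n) :
    ((0 : ℕ) + (4 * n - 1)) % (4 * n) = 4 * n - 1 := by
  rw [Nat.zero_add, Nat.mod_eq_of_lt (by omega)]

lemma gfun_inj {n x y : ℕ} (hx : x < 4 * n) (hy : y < 4 * n)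
    (h : (x + (4 * n - 1)) % (4 * n) = (y + (4 * n - 1)) % (4 * n)) : x = y := by
  rcases Nat.eq_zero_or_pos x with rfl | hx0
  · rcases Nat.eq_zero_or_pos y with rfl | hy0
    · rfl
    · rw [gfun_zero (by omega), gfun_pos hy0 hy] at h; omega
  · rcases Nat.eq_zero_or_pos y with rfl | hy0
    · rw [gfun_pos hx0 hx, gfun_zero (by omega)] at h; omega
    · rw [gfun_pos hx0 hx, gfun_pos hy0 hy] at h; omega

lemma finset_pair_lt {b : Finset ℕ} (hb : b.card = 2) :
    ∃ a c, a < c ∧ b = {a, c} := by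
  obtain ⟨a, c, hne, rfl⟩ := Finset.card_eq_two.mp hb
  rcases lt_or_gt_of_ne hne with h | h
  · exact ⟨a, c, h, rfl⟩
  · exact ⟨c, a, h, Finset.pair_comm a c⟩

lemma cross_pair_iff {a₁ a₂ c₁ c₂ : ℕ} (ha : a₁ < a₂) (hc : c₁ < c₂) :
    Cross {a₁, a₂} {c₁, c₂} ↔
      (a₁ < c₁ ∧ c₁ < a₂ ∧ a₂ < c₂) ∨ (c₁ < a₁ ∧ a₁ < c₂ ∧ c₂ < a₂) := by
  simp only [Cross, Finset.mem_insert, Finset.mem_singleton]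
  constructor
  · rintro (⟨i, hi, k, hk, j, hj, l, hl, h1, h2, h3⟩ | ⟨i, hi, k, hk, j, hj, l, hl, h1, h2, h3⟩) <;> omega
  · rintro (⟨h1, h2, h3⟩ | ⟨h1, h2, h3⟩)
    · exact Or.inl ⟨a₁, Or.inl rfl, a₂, Or.inr rfl, c₁, Or.inl rfl, c₂, Or.inr rfl, h1, h2, h3⟩
    · exact Or.inr ⟨c₁, Or.inl rfl, c₂, Or.inr rfl, a₁, Or.inl rfl, a₂, Or.inr rfl, h1, h2, h3⟩

lemma cross_symm {b b' : Finset ℕ} (h : Cross b b') : Cross b' b := by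
  rcases h with h | h
  · exact Or.inr h
  · exact Or.inl h

lemma shift_pair {n a c : ℕ} :
    shiftBlock n {a, c} = {(a + (4 * n - 1)) % (4 * n), (c + (4 * n - 1)) % (4 * n)} := by
  simp [shiftBlock, Finset.image_insert]

lemma cross_shift_aux {n : ℕ} {b b' : Finset ℕ} (hb : b.card = 2) (hb' : b'.card = 2)
    (hlt : ∀ x ∈ b, x < 4 * n) (hlt' : ∀ x ∈ b', x < 4 * n)
    (hd : Disjoint b b') (h0 : 0 ∉ b') :
    (Cross (shiftBlock n b) (shiftBlock n b') ↔ Cross b b') := by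
  obtain ⟨a₁, a₂, ha, rfl⟩ := finset_pair_lt hb
  obtain ⟨c₁, c₂, hc, rfl⟩ := finset_pair_lt hb'
  have ha₁ : a₁ < 4 * n := hlt _ (by simp)
  have ha₂ : a₂ < 4 * n := hlt _ (by simp)
  have hc₁ : c₁ < 4 * n := hlt' _ (by simp)
  have hc₂ : c₂ < 4 * n := hlt' _ (by simp)
  have hc₁0 : 0 < c₁ := by
    rcases Nat.eq_zero_or_pos c₁ with h | h
    · subst h; simp at h0
    · exact h
  have hc₂0 : 0 < c₂ := lt_trans hc₁0 hc
  have hdis : ∀ x ∈ ({a₁, a₂} : Finset ℕ), ∀ y ∈ ({c₁, c₂} : Finset ℕ), x ≠ y := by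
    intro x hx y hy hxy
    exact Finset.disjoint_left.mp hd hx (hxy ▸ hy) 
  have h12 : a₁ ≠ c₁ := hdis a₁ (by simp) c₁ (by simp)
  have h12' : a₁ ≠ c₂ := hdis a₁ (by simp) c₂ (by simp)
  have h22 : a₂ ≠ c₁ := hdis a₂ (by simp) c₁ (by simp)
  have h22' : a₂ ≠ c₂ := hdis a₂ (by simp) c₂ (by simp)
  rw [shift_pair, shift_pair]
  rw [gfun_pos hc₁0 hc₁, gfun_pos hc₂0 hc₂]
  rcases Nat.eq_zero_or_pos a₁ with rfl | ha₁0
  · -- a₁ = 0, image block is {4n-1, a₂-1}, reorder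
    have ha₂0 : 0 < a₂ := ha
    rw [gfun_zero (by omega), gfun_pos ha₂0 ha₂, Finset.pair_comm]
    rw [cross_pair_iff (by omega) (by omega), cross_pair_iff ha hc]
    omega
  · rw [gfun_pos ha₁0 ha₁, gfun_pos (by omega) ha₂]
    rw [cross_pair_iff (by omega) (by omega), cross_pair_iff ha hc]
    omega

lemma cross_shift {n : ℕ} {b b' : Finset ℕ} (hb : b.card = 2) (hb' : b'.card = 2)
    (hlt : ∀ x ∈ b, x < 4 * n) (hlt' : ∀ x ∈ b', x < 4 * n)
    (hd : Disjoint b b') :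
    (Cross (shiftBlock n b) (shiftBlock n b') ↔ Cross b b') := by
  by_cases h0 : 0 ∈ b'
  · have h0b : 0 ∉ b := fun h => Finset.disjoint_left.mp hd h h0
    have := cross_shift_aux hb' hb hlt' hlt hd.symm h0b
    constructor
    · intro h; exact cross_symm (this.mp (cross_symm h))
    · intro h; exact cross_symm (this.mpr (cross_symm h))
  · exact cross_shift_aux hb hb' hlt hlt' hd h0

lemma mem_shiftBlock {n : ℕ} {b : Finset ℕ} {y : ℕ} :
    y ∈ shiftBlock n b ↔ ∃ x ∈ b, (x + (4 * n - 1)) % (4 * n) = y := by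
  simp [shiftBlock]

lemma shiftBlock_card {n : ℕ} {b : Finset ℕ} (hlt : ∀ x ∈ b, x < 4 * n) :
    (shiftBlock n b).card = b.card :=
  Finset.card_image_of_injOn fun x hx y hy h => gfun_inj (hlt x hx) (hlt y hy) h

lemma shiftBlock_inj {n : ℕ} {b b' : Finset ℕ} (hlt : ∀ x ∈ b, x < 4 * n)
    (hlt' : ∀ x ∈ b', x < 4 * n) (h : shiftBlock n b = shiftBlock n b') : b = b' := by
  ext x
  constructor
  · intro hx
    have : (x + (4 * n - 1)) % (4 * n) ∈ shiftBlock n b' := by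
      rw [← h]; exact mem_shiftBlock.mpr ⟨x, hx, rfl⟩
    obtain ⟨y, hy, hyx⟩ := mem_shiftBlock.mp this
    rwa [← gfun_inj (hlt' y hy) (hlt x hx) hyx]
  · intro hx
    have : (x + (4 * n - 1)) % (4 * n) ∈ shiftBlock n b := by
      rw [h]; exact mem_shiftBlock.mpr ⟨x, hx, rfl⟩
    obtain ⟨y, hy, hyx⟩ := mem_shiftBlock.mp this
    rwa [← gfun_inj (hlt y hy) (hlt' x hx) hyx]

lemma shiftBlock_disjoint {n : ℕ} {b b' : Finset ℕ} (hlt : ∀ x ∈ b, x < 4 * n)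
    (hlt' : ∀ x ∈ b', x < 4 * n) (hd : Disjoint b b') :
    Disjoint (shiftBlock n b) (shiftBlock n b') := by
  rw [Finset.disjoint_left]
  intro y hy hy'
  obtain ⟨x, hx, rfl⟩ := mem_shiftBlock.mp hy
  obtain ⟨x', hx', hxx⟩ := mem_shiftBlock.mp hy'
  rw [gfun_inj (hlt' x' hx') (hlt x hx) hxx] at hx'
  exact Finset.disjoint_left.mp hd hx hx'

lemma matching_card {M : Finset (Finset ℕ)} {S : Finset ℕ} (hM : IsMatchingOn M S) :
    S.card = 2 * M.card := by
  obtain ⟨h2, hdisj, hcov⟩ := hM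
  have hS : S = M.biUnion (fun b => b) := by
    ext x
    simp only [Finset.mem_biUnion]
    exact hcov x
  rw [hS, Finset.card_biUnion hdisj]
  rw [Finset.sum_congr rfl (fun b hb => h2 b hb), Finset.sum_const, smul_eq_mul, mul_comm]

lemma exists_cross {n : ℕ} {Be Bo : Finset (Finset ℕ)} (hB : IsBasketball n Be Bo)
    {o : Finset ℕ} (ho : o ∈ Bo) : ∃ e ∈ Be, Cross e o := by
  obtain ⟨⟨⟨hBe2, hBedisj, hBecov⟩, hBenc⟩, ⟨⟨hBo2, hBodisj, hBocov⟩, hBonc⟩, hcount⟩ := hB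
  obtain ⟨j, l, hjl, rfl⟩ := finset_pair_lt (hBo2 o ho)
  have hjOn : j % 2 = 1 ∧ j < 4 * n := mem_On.mp ((hBocov j).mpr ⟨_, ho, by simp⟩)
  have hlOn : l % 2 = 1 ∧ l < 4 * n := mem_On.mp ((hBocov l).mpr ⟨_, ho, by simp⟩)
  set J : Finset ℕ := (On n).filter (fun x => j < x ∧ x < l) with hJdef
  have memJ : ∀ x, x ∈ J ↔ (x % 2 = 1 ∧ x < 4 * n) ∧ j < x ∧ x < l := by
    intro x; simp [hJdef, Finset.mem_filter, mem_On]
  -- every block of Bo other than o is entirely inside or entirely outside J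
  have hblocks : ∀ b ∈ Bo, b ≠ ({j, l} : Finset ℕ) →
      (∀ x ∈ b, x ∈ J) ∨ (∀ x ∈ b, x ∉ J) := by
    intro b hb hne
    obtain ⟨p, q, hpq, rfl⟩ := finset_pair_lt (hBo2 b hb)
    have hdisj := hBodisj _ hb _ ho hne
    have hpOn : p % 2 = 1 ∧ p < 4 * n := mem_On.mp ((hBocov p).mpr ⟨_, hb, by simp⟩)
    have hqOn : q % 2 = 1 ∧ q < 4 * n := mem_On.mp ((hBocov q).mpr ⟨_, hb, by simp⟩)
    have hnc := hBonc _ hb _ ho hne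
    rw [cross_pair_iff hpq hjl] at hnc
    have hdd : ∀ x ∈ ({p, q} : Finset ℕ), x ≠ j ∧ x ≠ l := by
      intro x hx
      constructor <;> intro h <;> exact Finset.disjoint_left.mp hdisj hx (by simp [h])
    have hpj := hdd p (by simp)
    have hqj := hdd q (by simp)
    by_cases hcase : j < p ∧ p < l
    · left
      intro x hx
      rcases Finset.mem_insert.mp hx with rfl | hx
      · rw [memJ]; exact ⟨hpOn, hcase⟩
      · rw [Finset.mem_singleton.mp hx, memJ]
        exact ⟨hqOn, by omega⟩
    · right
      intro x hx hxJ
      rw [memJ] at hxJ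
      rcases Finset.mem_insert.mp hx with rfl | hx
      · exact hcase hxJ.2
      · rw [Finset.mem_singleton.mp hx] at hxJ
        omega
  -- J is a disjoint union of blocks, hence has even cardinality
  have hJeq : J = (Bo.filter (fun b => ∀ x ∈ b, x ∈ J)).biUnion (fun b => b) := by
    ext x
    simp only [Finset.mem_biUnion, Finset.mem_filter]
    constructor
    · intro hx
      have hx' := (memJ x).mp hx
      obtain ⟨b, hb, hxb⟩ := (hBocov x).mp (mem_On.mpr hx'.1)
      have hbne : b ≠ ({j, l} : Finset ℕ) := by
        rintro rfl
        simp only [Finset.mem_insert, Finset.mem_singleton] at hxb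
        omega
      rcases hblocks b hb hbne with h | h
      · exact ⟨b, ⟨hb, h⟩, hxb⟩
      · exact absurd hx (h x hxb)
    · rintro ⟨b, ⟨hb, hbJ⟩, hxb⟩
      exact hbJ x hxb
  have hJcard : J.card % 2 = 0 := by
    rw [hJeq, Finset.card_biUnion (fun b hb b' hb' hne =>
      hBodisj b (Finset.mem_filter.mp hb).1 b' (Finset.mem_filter.mp hb').1 hne)]
    rw [Finset.sum_congr rfl (fun b hb => hBo2 b (Finset.mem_filter.mp hb).1)]
    rw [Finset.sum_const, smul_eq_mul]
    omega
  -- the set of even points strictly between j and l has odd cardinality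
  set I : Finset ℕ := (En n).filter (fun x => j < x ∧ x < l) with hIdef
  have memI : ∀ x, x ∈ I ↔ (x % 2 = 0 ∧ x < 4 * n) ∧ j < x ∧ x < l := by
    intro x; simp [hIdef, Finset.mem_filter, mem_En]
  have hIJ : I = insert (j + 1) (J.image (· + 1)) := by
    ext x
    rw [Finset.mem_insert, memI]
    simp only [Finset.mem_image]
    constructor
    · rintro ⟨⟨h1, h2⟩, h3, h4⟩
      by_cases hx : x = j + 1
      · exact Or.inl hx
      · refine Or.inr ⟨x - 1, (memJ _).mpr ⟨⟨by omega, by omega⟩, by omega, by omega⟩, by omega⟩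
    · rintro (rfl | ⟨y, hy, rfl⟩)
      · refine ⟨⟨by omega, by omega⟩, by omega, by omega⟩
      · have := (memJ y).mp hy
        refine ⟨⟨by omega, by omega⟩, by omega, by omega⟩
  have hInotmem : (j + 1) ∉ J.image (· + 1) := by
    simp only [Finset.mem_image, not_exists]
    rintro y ⟨hy, hy1⟩
    have := (memJ y).mp hy
    omega
  have hIcard : I.card % 2 = 1 := by
    rw [hIJ, Finset.card_insert_of_notMem hInotmem,
      Finset.card_image_of_injective _ (add_left_injective 1)]
    omega
  -- I is partitioned by its intersections with the blocks of Be
  have hIsum : ∑ e ∈ Be, (e ∩ I).card = I.card := by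
    have hI2 : I = Be.biUnion (fun e => e ∩ I) := by
      ext x
      simp only [Finset.mem_biUnion, Finset.mem_inter]
      constructor
      · intro hx
        have hx' := (memI x).mp hx
        obtain ⟨e, he, hxe⟩ := (hBecov x).mp (mem_En.mpr hx'.1)
        exact ⟨e, he, hxe, hx⟩
      · rintro ⟨e, he, _, hx⟩; exact hx
    conv_rhs => rw [hI2]
    rw [Finset.card_biUnion (fun e he e' he' hne =>
      (hBedisj e he e' he' hne).mono Finset.inter_subset_left Finset.inter_subset_left)]
  have hexists : ∃ e ∈ Be, (e ∩ I).card % 2 = 1 := by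
    by_contra hcon
    push_neg at hcon
    have hz : (∑ e ∈ Be, (e ∩ I).card) % 2 = 0 := by
      have hz0 : ∀ e ∈ Be, (e ∩ I).card % 2 = 0 := fun e he => by
        have := hcon e he; omega
      rw [Finset.sum_nat_mod, Finset.sum_congr rfl hz0]
      simp
    omega
  obtain ⟨e, he, hodd⟩ := hexists
  have hle : (e ∩ I).card ≤ 2 := (hBe2 e he) ▸ Finset.card_le_card Finset.inter_subset_left
  have hone : (e ∩ I).card = 1 := by omega
  obtain ⟨a, c, hac, rfl⟩ := finset_pair_lt (hBe2 e he)
  have haEn := mem_En.mp ((hBecov a).mpr ⟨_, he, by simp⟩)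
  have hcEn := mem_En.mp ((hBecov c).mpr ⟨_, he, by simp⟩)
  obtain ⟨x, hx⟩ := Finset.card_eq_one.mp hone
  have hxmem : x ∈ ({a, c} : Finset ℕ) ∩ I := hx ▸ Finset.mem_singleton_self x
  rw [Finset.mem_inter] at hxmem
  refine ⟨{a, c}, he, (cross_pair_iff hac hjl).mpr ?_⟩
  rcases Finset.mem_insert.mp hxmem.1 with rfl | hxc
  · -- x = a is inside (j, l)
    have haI := (memI x).mp hxmem.2
    have hcI : ¬ (j < c ∧ c < l) := by
      intro hcc
      have : c ∈ ({x, c} : Finset ℕ) ∩ I :=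
        Finset.mem_inter.mpr ⟨by simp, (memI c).mpr ⟨hcEn, hcc⟩⟩
      rw [hx, Finset.mem_singleton] at this
      omega
    omega
  · -- x = c is inside (j, l)
    rw [Finset.mem_singleton] at hxc
    subst hxc
    have hcI := (memI x).mp hxmem.2
    have haI : ¬ (j < a ∧ a < l) := by
      intro hcc
      have : a ∈ ({a, x} : Finset ℕ) ∩ I :=
        Finset.mem_inter.mpr ⟨by simp, (memI a).mpr ⟨haEn, hcc⟩⟩
      rw [hx, Finset.mem_singleton] at this
      omega
    omega

lemma En_card {n : ℕ} : (En n).card = 2 * n := by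
  rw [En, Finset.card_image_of_injective _ (mul_right_injective₀ (two_ne_zero)),
    Finset.card_range]

lemma On_card {n : ℕ} : (On n).card = 2 * n := by
  have hinj : Function.Injective (fun i : ℕ => 2 * i + 1) := by
    intro a b h
    simp only [add_left_inj] at h
    omega
  rw [On, Finset.card_image_of_injective _ hinj, Finset.card_range]

theorem stmt_10 (n : ℕ) (Be Bo : Finset (Finset ℕ)) (hB : IsBasketball n Be Bo) :
    IsBasketball n (Bo.image (shiftBlock n)) (Be.image (shiftBlock n)) := by
  have hEx : ∀ o ∈ Bo, ∃ e ∈ Be, Cross e o := fun o ho => exists_cross hB ho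
  obtain ⟨⟨⟨hBe2, hBedisj, hBecov⟩, hBenc⟩, ⟨⟨hBo2, hBodisj, hBocov⟩, hBonc⟩, hcount⟩ := hB
  have hBeE : ∀ b ∈ Be, ∀ x ∈ b, x % 2 = 0 ∧ x < 4 * n :=
    fun b hb x hx => mem_En.mp ((hBecov x).mpr ⟨b, hb, hx⟩)
  have hBoO : ∀ b ∈ Bo, ∀ x ∈ b, x % 2 = 1 ∧ x < 4 * n :=
    fun b hb x hx => mem_On.mp ((hBocov x).mpr ⟨b, hb, hx⟩)
  have hBelt : ∀ b ∈ Be, ∀ x ∈ b, x < 4 * n := fun b hb x hx => (hBeE b hb x hx).2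
  have hBolt : ∀ b ∈ Bo, ∀ x ∈ b, x < 4 * n := fun b hb x hx => (hBoO b hb x hx).2
  have hdisjEO : ∀ e ∈ Be, ∀ o ∈ Bo, Disjoint o e := by
    intro e he o ho
    rw [Finset.disjoint_left]
    intro x hxo hxe
    have h1 := hBeE e he x hxe
    have h2 := hBoO o ho x hxo
    omega
  -- the key counting fact
  have hkey : ∀ o ∈ Bo, (Be.filter (fun e => Cross e o)).card = 1 := by
    have hcards : Be.card = Bo.card := by
      have h1 : (En n).card = 2 * Be.card := matching_card ⟨hBe2, hBedisj, hBecov⟩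
      have h2 : (On n).card = 2 * Bo.card := matching_card ⟨hBo2, hBodisj, hBocov⟩
      have h3 := En_card (n := n)
      have h4 := On_card (n := n)
      omega
    have hsum1 : ∑ e ∈ Be, (Bo.filter (fun o => Cross e o)).card = Be.card := by
      rw [Finset.sum_congr rfl hcount, Finset.sum_const, smul_eq_mul, mul_one]
    have hswap : ∑ o ∈ Bo, (Be.filter (fun e => Cross e o)).card
        = ∑ e ∈ Be, (Bo.filter (fun o => Cross e o)).card := by
      simp only [Finset.card_filter]
      exact Finset.sum_comm
    have hge : ∀ o ∈ Bo, 1 ≤ (Be.filter (fun e => Cross e o)).card := by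
      intro o ho
      obtain ⟨e, he, hc⟩ := hEx o ho
      exact Finset.card_pos.mpr ⟨e, Finset.mem_filter.mpr ⟨he, hc⟩⟩
    have htot : ∑ o ∈ Bo, (1 : ℕ) = ∑ o ∈ Bo, (Be.filter (fun e => Cross e o)).card := by
      rw [hswap, hsum1, Finset.sum_const, smul_eq_mul, mul_one, hcards]
    intro o ho
    exact ((Finset.sum_eq_sum_iff_of_le hge).mp htot o ho).symm
  refine ⟨⟨⟨?_, ?_, ?_⟩, ?_⟩, ⟨⟨?_, ?_, ?_⟩, ?_⟩, ?_⟩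
  · -- card 2
    intro b hb
    obtain ⟨b₀, hb₀, rfl⟩ := Finset.mem_image.mp hb
    rw [shiftBlock_card (hBolt _ hb₀)]
    exact hBo2 _ hb₀
  · -- disjoint
    intro b hb b' hb' hne
    obtain ⟨b₁, h₁, rfl⟩ := Finset.mem_image.mp hb
    obtain ⟨b₂, h₂, rfl⟩ := Finset.mem_image.mp hb'
    exact shiftBlock_disjoint (hBolt _ h₁) (hBolt _ h₂)
      (hBodisj _ h₁ _ h₂ (by rintro rfl; exact hne rfl))
  · -- cover En
    intro x
    constructor
    · intro hx
      have hx' := mem_En.mp hx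
      have hx1 : x + 1 ∈ On n := mem_On.mpr ⟨by omega, by omega⟩
      obtain ⟨b, hb, hxb⟩ := (hBocov (x + 1)).mp hx1
      refine ⟨shiftBlock n b, Finset.mem_image_of_mem _ hb, mem_shiftBlock.mpr ⟨x + 1, hxb, ?_⟩⟩
      rw [gfun_pos (Nat.succ_pos x) (by omega)]
      omega
    · rintro ⟨b', hb', hxb'⟩
      obtain ⟨b, hb, rfl⟩ := Finset.mem_image.mp hb'
      obtain ⟨y, hy, rfl⟩ := mem_shiftBlock.mp hxb'
      have hyO := hBoO b hb y hy
      rw [gfun_pos (by omega) (by omega)]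
      exact mem_En.mpr ⟨by omega, by omega⟩
  · -- noncrossing
    intro b hb b' hb' hne
    obtain ⟨b₁, h₁, rfl⟩ := Finset.mem_image.mp hb
    obtain ⟨b₂, h₂, rfl⟩ := Finset.mem_image.mp hb'
    have hne₁ : b₁ ≠ b₂ := by rintro rfl; exact hne rfl
    rw [cross_shift (hBo2 _ h₁) (hBo2 _ h₂) (hBolt _ h₁) (hBolt _ h₂) (hBodisj _ h₁ _ h₂ hne₁)]
    exact hBonc _ h₁ _ h₂ hne₁
  · -- card 2 (odd side)
    intro b hb
    obtain ⟨b₀, hb₀, rfl⟩ := Finset.mem_image.mp hb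
    rw [shiftBlock_card (hBelt _ hb₀)]
    exact hBe2 _ hb₀
  · -- disjoint (odd side)
    intro b hb b' hb' hne
    obtain ⟨b₁, h₁, rfl⟩ := Finset.mem_image.mp hb
    obtain ⟨b₂, h₂, rfl⟩ := Finset.mem_image.mp hb'
    exact shiftBlock_disjoint (hBelt _ h₁) (hBelt _ h₂)
      (hBedisj _ h₁ _ h₂ (by rintro rfl; exact hne rfl))
  · -- cover On
    intro x
    constructor
    · intro hx
      have hx' := mem_On.mp hx
      by_cases hx4 : x = 4 * n - 1
      · have h0 : (0 : ℕ) ∈ En n := mem_En.mpr ⟨by omega, by omega⟩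
        obtain ⟨b, hb, h0b⟩ := (hBecov 0).mp h0
        refine ⟨shiftBlock n b, Finset.mem_image_of_mem _ hb, mem_shiftBlock.mpr ⟨0, h0b, ?_⟩⟩
        rw [gfun_zero (by omega)]
        omega
      · have hx1 : x + 1 ∈ En n := mem_En.mpr ⟨by omega, by omega⟩
        obtain ⟨b, hb, hxb⟩ := (hBecov (x + 1)).mp hx1
        refine ⟨shiftBlock n b, Finset.mem_image_of_mem _ hb, mem_shiftBlock.mpr ⟨x + 1, hxb, ?_⟩⟩
        rw [gfun_pos (Nat.succ_pos x) (by omega)]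
        omega
    · rintro ⟨b', hb', hxb'⟩
      obtain ⟨b, hb, rfl⟩ := Finset.mem_image.mp hb'
      obtain ⟨y, hy, rfl⟩ := mem_shiftBlock.mp hxb'
      have hyE := hBeE b hb y hy
      rcases Nat.eq_zero_or_pos y with rfl | hy0
      · rw [gfun_zero (by omega)]
        exact mem_On.mpr ⟨by omega, by omega⟩
      · rw [gfun_pos hy0 (by omega)]
        exact mem_On.mpr ⟨by omega, by omega⟩
  · -- noncrossing (odd side)
    intro b hb b' hb' hne
    obtain ⟨b₁, h₁, rfl⟩ := Finset.mem_image.mp hb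
    obtain ⟨b₂, h₂, rfl⟩ := Finset.mem_image.mp hb'
    have hne₁ : b₁ ≠ b₂ := by rintro rfl; exact hne rfl
    rw [cross_shift (hBe2 _ h₁) (hBe2 _ h₂) (hBelt _ h₁) (hBelt _ h₂) (hBedisj _ h₁ _ h₂ hne₁)]
    exact hBenc _ h₁ _ h₂ hne₁
  · -- counting condition
    intro e' he'
    obtain ⟨o, ho, rfl⟩ := Finset.mem_image.mp he'
    have hA : (Be.image (shiftBlock n)).filter (fun b => Cross (shiftBlock n o) b)
        = (Be.filter (fun e => Cross (shiftBlock n o) (shiftBlock n e))).image (shiftBlock n) := by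
      ext x
      simp only [Finset.mem_filter, Finset.mem_image]
      constructor
      · rintro ⟨⟨e, he, rfl⟩, hc⟩
        exact ⟨e, ⟨he, hc⟩, rfl⟩
      · rintro ⟨e, ⟨he, hc⟩, rfl⟩
        exact ⟨⟨e, he, rfl⟩, hc⟩
    have hB' : Be.filter (fun e => Cross (shiftBlock n o) (shiftBlock n e))
        = Be.filter (fun e => Cross e o) := by
      apply Finset.filter_congr
      intro e he
      rw [cross_shift (hBo2 _ ho) (hBe2 _ he) (hBolt _ ho) (hBelt _ he)
        ((hdisjEO e he o ho))]
      exact ⟨fun h => cross_symm h, fun h => cross_symm h⟩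
    rw [hA, hB', Finset.card_image_of_injOn
      (fun e₁ h₁ e₂ h₂ h => shiftBlock_inj (hBelt _ (Finset.mem_filter.mp h₁).1)
        (hBelt _ (Finset.mem_filter.mp h₂).1) h)]
    exact hkey o ho
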